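/- arXiv:math/0304181 — 4 statements merged into one kernel-verified Lean document; each statement's English description precedes it below -/
import Mathlib

section
/- The Fano plane P^2(F_2) cannot be embedded in the complex projective plane: there is no injective map from the 7 points of P^2(F_2) to P^2(C) such that three points lie on a line in P^2(C) if and only if the corresponding points are collinear in P^2(F_2). -/
open Matrix Projectivization

lemma fanoAux_li_iff {K : Type*} [Field K] (u v w : Fin 3 → K) :
    LinearIndependent K ![u, v, w] ↔ (Matrix.of ![u, v, w]).det ≠ 0 := by
  rw [← isUnit_iff_ne_zero, ← Matrix.isUnit_iff_isUnit_det]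
  exact Matrix.linearIndependent_rows_iff_isUnit

lemma fanoAux_rep_mk (v : Fin 3 → ZMod 2) (hv : v ≠ 0) :
    (Projectivization.mk (ZMod 2) v hv).rep = v := by
  have h := Projectivization.mk_rep (Projectivization.mk (ZMod 2) v hv)
  rw [Projectivization.mk_eq_mk_iff] at h
  obtain ⟨a, ha⟩ := h
  rw [Subsingleton.elim a 1, one_smul] at ha
  exact ha.symm

lemma fanoAux_mk_ne (v w : Fin 3 → ZMod 2) (hv : v ≠ 0) (hw : w ≠ 0) (h : v ≠ w) :
    Projectivization.mk (ZMod 2) v hv ≠ Projectivization.mk (ZMod 2) w hw := by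
  intro he
  rw [Projectivization.mk_eq_mk_iff] at he
  obtain ⟨a, ha⟩ := he
  rw [Subsingleton.elim a 1, one_smul] at ha
  exact h ha.symm

/-- The Fano plane `ℙ²(𝔽₂)` cannot be embedded in the complex projective plane:
there is no injective map from the points of `ℙ²(𝔽₂)` to `ℙ²(ℂ)` such that three
pairwise distinct points span a line (i.e. are linearly dependent) in `ℙ²(ℂ)` if and
only if the corresponding points are collinear in `ℙ²(𝔽₂)`. -/
theorem fano_plane_not_embeddable_in_complex_projective_plane :
    ¬ ∃ f : Projectivization (ZMod 2) (Fin 3 → ZMod 2) →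
        Projectivization ℂ (Fin 3 → ℂ),
      Function.Injective f ∧
      ∀ p q r : Projectivization (ZMod 2) (Fin 3 → ZMod 2),
        p ≠ q → p ≠ r → q ≠ r →
        (¬ LinearIndependent (ZMod 2) ![p.rep, q.rep, r.rep] ↔
          ¬ LinearIndependent ℂ ![(f p).rep, (f q).rep, (f r).rep]) := by
  rintro ⟨f, -, hf⟩
  set a := (f (Projectivization.mk (ZMod 2) (![1,0,0] : Fin 3 → ZMod 2) (by decide))).rep with ha
  set b := (f (Projectivization.mk (ZMod 2) (![0,1,0] : Fin 3 → ZMod 2) (by decide))).rep with hb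
  set c := (f (Projectivization.mk (ZMod 2) (![0,0,1] : Fin 3 → ZMod 2) (by decide))).rep with hc
  set d := (f (Projectivization.mk (ZMod 2) (![1,1,1] : Fin 3 → ZMod 2) (by decide))).rep with hd
  set x := (f (Projectivization.mk (ZMod 2) (![1,1,0] : Fin 3 → ZMod 2) (by decide))).rep with hx
  set y := (f (Projectivization.mk (ZMod 2) (![1,0,1] : Fin 3 → ZMod 2) (by decide))).rep with hy
  set z := (f (Projectivization.mk (ZMod 2) (![0,1,1] : Fin 3 → ZMod 2) (by decide))).rep with hz
  have dabc : (Matrix.of ![a, b, c]).det ≠ 0 := by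
    have h := hf (Projectivization.mk (ZMod 2) (![1,0,0] : Fin 3 → ZMod 2) (by decide)) (Projectivization.mk (ZMod 2) (![0,1,0] : Fin 3 → ZMod 2) (by decide)) (Projectivization.mk (ZMod 2) (![0,0,1] : Fin 3 → ZMod 2) (by decide))
      (fanoAux_mk_ne _ _ _ _ (by decide)) (fanoAux_mk_ne _ _ _ _ (by decide))
      (fanoAux_mk_ne _ _ _ _ (by decide))
    rw [fanoAux_rep_mk, fanoAux_rep_mk, fanoAux_rep_mk, ← ha, ← hb, ← hc] at h
    intro h0
    exact h.mpr (by rw [fanoAux_li_iff]; exact fun hne => hne h0)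
      (by rw [fanoAux_li_iff, Matrix.det_fin_three]; decide)
  have dbcd : (Matrix.of ![b, c, d]).det ≠ 0 := by
    have h := hf (Projectivization.mk (ZMod 2) (![0,1,0] : Fin 3 → ZMod 2) (by decide)) (Projectivization.mk (ZMod 2) (![0,0,1] : Fin 3 → ZMod 2) (by decide)) (Projectivization.mk (ZMod 2) (![1,1,1] : Fin 3 → ZMod 2) (by decide))
      (fanoAux_mk_ne _ _ _ _ (by decide)) (fanoAux_mk_ne _ _ _ _ (by decide))
      (fanoAux_mk_ne _ _ _ _ (by decide))
    rw [fanoAux_rep_mk, fanoAux_rep_mk, fanoAux_rep_mk, ← hb, ← hc, ← hd] at h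
    intro h0
    exact h.mpr (by rw [fanoAux_li_iff]; exact fun hne => hne h0)
      (by rw [fanoAux_li_iff, Matrix.det_fin_three]; decide)
  have dacd : (Matrix.of ![a, c, d]).det ≠ 0 := by
    have h := hf (Projectivization.mk (ZMod 2) (![1,0,0] : Fin 3 → ZMod 2) (by decide)) (Projectivization.mk (ZMod 2) (![0,0,1] : Fin 3 → ZMod 2) (by decide)) (Projectivization.mk (ZMod 2) (![1,1,1] : Fin 3 → ZMod 2) (by decide))
      (fanoAux_mk_ne _ _ _ _ (by decide)) (fanoAux_mk_ne _ _ _ _ (by decide))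
      (fanoAux_mk_ne _ _ _ _ (by decide))
    rw [fanoAux_rep_mk, fanoAux_rep_mk, fanoAux_rep_mk, ← ha, ← hc, ← hd] at h
    intro h0
    exact h.mpr (by rw [fanoAux_li_iff]; exact fun hne => hne h0)
      (by rw [fanoAux_li_iff, Matrix.det_fin_three]; decide)
  have dabd : (Matrix.of ![a, b, d]).det ≠ 0 := by
    have h := hf (Projectivization.mk (ZMod 2) (![1,0,0] : Fin 3 → ZMod 2) (by decide)) (Projectivization.mk (ZMod 2) (![0,1,0] : Fin 3 → ZMod 2) (by decide)) (Projectivization.mk (ZMod 2) (![1,1,1] : Fin 3 → ZMod 2) (by decide))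
      (fanoAux_mk_ne _ _ _ _ (by decide)) (fanoAux_mk_ne _ _ _ _ (by decide))
      (fanoAux_mk_ne _ _ _ _ (by decide))
    rw [fanoAux_rep_mk, fanoAux_rep_mk, fanoAux_rep_mk, ← ha, ← hb, ← hd] at h
    intro h0
    exact h.mpr (by rw [fanoAux_li_iff]; exact fun hne => hne h0)
      (by rw [fanoAux_li_iff, Matrix.det_fin_three]; decide)
  have dabx : (Matrix.of ![a, b, x]).det = 0 := by
    have h := hf (Projectivization.mk (ZMod 2) (![1,0,0] : Fin 3 → ZMod 2) (by decide)) (Projectivization.mk (ZMod 2) (![0,1,0] : Fin 3 → ZMod 2) (by decide)) (Projectivization.mk (ZMod 2) (![1,1,0] : Fin 3 → ZMod 2) (by decide))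
      (fanoAux_mk_ne _ _ _ _ (by decide)) (fanoAux_mk_ne _ _ _ _ (by decide))
      (fanoAux_mk_ne _ _ _ _ (by decide))
    rw [fanoAux_rep_mk, fanoAux_rep_mk, fanoAux_rep_mk, ← ha, ← hb, ← hx] at h
    have hC := h.mp (by rw [fanoAux_li_iff, Matrix.det_fin_three]; decide)
    rw [fanoAux_li_iff, not_not] at hC
    exact hC
  have dcdx : (Matrix.of ![c, d, x]).det = 0 := by
    have h := hf (Projectivization.mk (ZMod 2) (![0,0,1] : Fin 3 → ZMod 2) (by decide)) (Projectivization.mk (ZMod 2) (![1,1,1] : Fin 3 → ZMod 2) (by decide)) (Projectivization.mk (ZMod 2) (![1,1,0] : Fin 3 → ZMod 2) (by decide))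
      (fanoAux_mk_ne _ _ _ _ (by decide)) (fanoAux_mk_ne _ _ _ _ (by decide))
      (fanoAux_mk_ne _ _ _ _ (by decide))
    rw [fanoAux_rep_mk, fanoAux_rep_mk, fanoAux_rep_mk, ← hc, ← hd, ← hx] at h
    have hC := h.mp (by rw [fanoAux_li_iff, Matrix.det_fin_three]; decide)
    rw [fanoAux_li_iff, not_not] at hC
    exact hC
  have dacy : (Matrix.of ![a, c, y]).det = 0 := by
    have h := hf (Projectivization.mk (ZMod 2) (![1,0,0] : Fin 3 → ZMod 2) (by decide)) (Projectivization.mk (ZMod 2) (![0,0,1] : Fin 3 → ZMod 2) (by decide)) (Projectivization.mk (ZMod 2) (![1,0,1] : Fin 3 → ZMod 2) (by decide))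
      (fanoAux_mk_ne _ _ _ _ (by decide)) (fanoAux_mk_ne _ _ _ _ (by decide))
      (fanoAux_mk_ne _ _ _ _ (by decide))
    rw [fanoAux_rep_mk, fanoAux_rep_mk, fanoAux_rep_mk, ← ha, ← hc, ← hy] at h
    have hC := h.mp (by rw [fanoAux_li_iff, Matrix.det_fin_three]; decide)
    rw [fanoAux_li_iff, not_not] at hC
    exact hC
  have dbdy : (Matrix.of ![b, d, y]).det = 0 := by
    have h := hf (Projectivization.mk (ZMod 2) (![0,1,0] : Fin 3 → ZMod 2) (by decide)) (Projectivization.mk (ZMod 2) (![1,1,1] : Fin 3 → ZMod 2) (by decide)) (Projectivization.mk (ZMod 2) (![1,0,1] : Fin 3 → ZMod 2) (by decide))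
      (fanoAux_mk_ne _ _ _ _ (by decide)) (fanoAux_mk_ne _ _ _ _ (by decide))
      (fanoAux_mk_ne _ _ _ _ (by decide))
    rw [fanoAux_rep_mk, fanoAux_rep_mk, fanoAux_rep_mk, ← hb, ← hd, ← hy] at h
    have hC := h.mp (by rw [fanoAux_li_iff, Matrix.det_fin_three]; decide)
    rw [fanoAux_li_iff, not_not] at hC
    exact hC
  have dbcz : (Matrix.of ![b, c, z]).det = 0 := by
    have h := hf (Projectivization.mk (ZMod 2) (![0,1,0] : Fin 3 → ZMod 2) (by decide)) (Projectivization.mk (ZMod 2) (![0,0,1] : Fin 3 → ZMod 2) (by decide)) (Projectivization.mk (ZMod 2) (![0,1,1] : Fin 3 → ZMod 2) (by decide))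
      (fanoAux_mk_ne _ _ _ _ (by decide)) (fanoAux_mk_ne _ _ _ _ (by decide))
      (fanoAux_mk_ne _ _ _ _ (by decide))
    rw [fanoAux_rep_mk, fanoAux_rep_mk, fanoAux_rep_mk, ← hb, ← hc, ← hz] at h
    have hC := h.mp (by rw [fanoAux_li_iff, Matrix.det_fin_three]; decide)
    rw [fanoAux_li_iff, not_not] at hC
    exact hC
  have dadz : (Matrix.of ![a, d, z]).det = 0 := by
    have h := hf (Projectivization.mk (ZMod 2) (![1,0,0] : Fin 3 → ZMod 2) (by decide)) (Projectivization.mk (ZMod 2) (![1,1,1] : Fin 3 → ZMod 2) (by decide)) (Projectivization.mk (ZMod 2) (![0,1,1] : Fin 3 → ZMod 2) (by decide))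
      (fanoAux_mk_ne _ _ _ _ (by decide)) (fanoAux_mk_ne _ _ _ _ (by decide))
      (fanoAux_mk_ne _ _ _ _ (by decide))
    rw [fanoAux_rep_mk, fanoAux_rep_mk, fanoAux_rep_mk, ← ha, ← hd, ← hz] at h
    have hC := h.mp (by rw [fanoAux_li_iff, Matrix.det_fin_three]; decide)
    rw [fanoAux_li_iff, not_not] at hC
    exact hC
  have dxyz : (Matrix.of ![x, y, z]).det = 0 := by
    have h := hf (Projectivization.mk (ZMod 2) (![1,1,0] : Fin 3 → ZMod 2) (by decide)) (Projectivization.mk (ZMod 2) (![1,0,1] : Fin 3 → ZMod 2) (by decide)) (Projectivization.mk (ZMod 2) (![0,1,1] : Fin 3 → ZMod 2) (by decide))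
      (fanoAux_mk_ne _ _ _ _ (by decide)) (fanoAux_mk_ne _ _ _ _ (by decide))
      (fanoAux_mk_ne _ _ _ _ (by decide))
    rw [fanoAux_rep_mk, fanoAux_rep_mk, fanoAux_rep_mk, ← hx, ← hy, ← hz] at h
    have hC := h.mp (by rw [fanoAux_li_iff, Matrix.det_fin_three]; decide)
    rw [fanoAux_li_iff, not_not] at hC
    exact hC
  set N := (Matrix.of ![a, b, c])⁻¹ with hNdef
  have hMN : Matrix.of ![a, b, c] * N = 1 := Matrix.mul_nonsing_inv _ (isUnit_iff_ne_zero.2 dabc)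
  have hNdet : N.det ≠ 0 := by
    have h1 : (Matrix.of ![a, b, c]).det * N.det = 1 := by
      rw [← Matrix.det_mul, hMN, Matrix.det_one]
    intro h0
    rw [h0, mul_zero] at h1
    exact zero_ne_one h1
  have key : ∀ u v w : Fin 3 → ℂ, (Matrix.of ![u, v, w]).det = 0 →
      (Matrix.of ![Matrix.vecMul u N, Matrix.vecMul v N, Matrix.vecMul w N]).det = 0 := by
    intro u v w hd
    have h1 : Matrix.of ![Matrix.vecMul u N, Matrix.vecMul v N, Matrix.vecMul w N]
        = Matrix.of ![u, v, w] * N := by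
      ext i j
      fin_cases i <;> simp [Matrix.mul_apply, Matrix.vecMul, dotProduct]
    rw [h1, Matrix.det_mul, hd, zero_mul]
  have hA : Matrix.vecMul a N = ![1, 0, 0] := by
    have h1 : Matrix.vecMul a N = (Matrix.of ![a, b, c] * N) 0 := by
      ext j
      simp [Matrix.mul_apply, Matrix.vecMul, dotProduct]
    rw [h1, hMN]
    ext j
    fin_cases j <;> simp [Matrix.one_apply]
  have hB : Matrix.vecMul b N = ![0, 1, 0] := by
    have h1 : Matrix.vecMul b N = (Matrix.of ![a, b, c] * N) 1 := by
      ext j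
      simp [Matrix.mul_apply, Matrix.vecMul, dotProduct]
    rw [h1, hMN]
    ext j
    fin_cases j <;> simp [Matrix.one_apply]
  have hC : Matrix.vecMul c N = ![0, 0, 1] := by
    have h1 : Matrix.vecMul c N = (Matrix.of ![a, b, c] * N) 2 := by
      ext j
      simp [Matrix.mul_apply, Matrix.vecMul, dotProduct]
    rw [h1, hMN]
    ext j
    fin_cases j <;> simp [Matrix.one_apply]
  obtain ⟨α, β, γ, hD⟩ : ∃ u1 u2 u3, Matrix.vecMul d N = ![u1, u2, u3] :=
    ⟨_, _, _, by ext j; fin_cases j <;> rfl⟩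
  obtain ⟨x₁, x₂, x₃, hX⟩ : ∃ u1 u2 u3, Matrix.vecMul x N = ![u1, u2, u3] :=
    ⟨_, _, _, by ext j; fin_cases j <;> rfl⟩
  obtain ⟨y₁, y₂, y₃, hY⟩ : ∃ u1 u2 u3, Matrix.vecMul y N = ![u1, u2, u3] :=
    ⟨_, _, _, by ext j; fin_cases j <;> rfl⟩
  obtain ⟨z₁, z₂, z₃, hZ⟩ : ∃ u1 u2 u3, Matrix.vecMul z N = ![u1, u2, u3] :=
    ⟨_, _, _, by ext j; fin_cases j <;> rfl⟩
  have hα : α ≠ 0 := by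
    intro h0
    apply dbcd
    have h1 : Matrix.of ![b, c, d] * N = Matrix.of ![Matrix.vecMul b N, Matrix.vecMul c N, Matrix.vecMul d N] := by
      ext i j
      fin_cases i <;> simp [Matrix.mul_apply, Matrix.vecMul, dotProduct]
    have h2 : (Matrix.of ![b, c, d]).det * N.det = 0 := by
      rw [← Matrix.det_mul, h1, hB, hC, hD, Matrix.det_fin_three]
      simp only [Matrix.of_apply, Matrix.cons_val', Matrix.cons_val_zero, Matrix.empty_val',
      Matrix.cons_val_fin_one, Matrix.cons_val_one, Matrix.head_cons, Matrix.head_fin_const,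
      Matrix.cons_val_two, Matrix.tail_cons]
      linear_combination h0
    rcases mul_eq_zero.mp h2 with h3 | h3
    · exact h3
    · exact absurd h3 hNdet
  have hβ : β ≠ 0 := by
    intro h0
    apply dacd
    have h1 : Matrix.of ![a, c, d] * N = Matrix.of ![Matrix.vecMul a N, Matrix.vecMul c N, Matrix.vecMul d N] := by
      ext i j
      fin_cases i <;> simp [Matrix.mul_apply, Matrix.vecMul, dotProduct]
    have h2 : (Matrix.of ![a, c, d]).det * N.det = 0 := by
      rw [← Matrix.det_mul, h1, hA, hC, hD, Matrix.det_fin_three]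
      simp only [Matrix.of_apply, Matrix.cons_val', Matrix.cons_val_zero, Matrix.empty_val',
      Matrix.cons_val_fin_one, Matrix.cons_val_one, Matrix.head_cons, Matrix.head_fin_const,
      Matrix.cons_val_two, Matrix.tail_cons]
      linear_combination -h0
    rcases mul_eq_zero.mp h2 with h3 | h3
    · exact h3
    · exact absurd h3 hNdet
  have hγ : γ ≠ 0 := by
    intro h0
    apply dabd
    have h1 : Matrix.of ![a, b, d] * N = Matrix.of ![Matrix.vecMul a N, Matrix.vecMul b N, Matrix.vecMul d N] := by
      ext i j
      fin_cases i <;> simp [Matrix.mul_apply, Matrix.vecMul, dotProduct]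
    have h2 : (Matrix.of ![a, b, d]).det * N.det = 0 := by
      rw [← Matrix.det_mul, h1, hA, hB, hD, Matrix.det_fin_three]
      simp only [Matrix.of_apply, Matrix.cons_val', Matrix.cons_val_zero, Matrix.empty_val',
      Matrix.cons_val_fin_one, Matrix.cons_val_one, Matrix.head_cons, Matrix.head_fin_const,
      Matrix.cons_val_two, Matrix.tail_cons]
      linear_combination h0
    rcases mul_eq_zero.mp h2 with h3 | h3
    · exact h3
    · exact absurd h3 hNdet
  have e4 : x₃ = 0 := by
    have h := key a b x dabx
    rw [hA, hB, hX, Matrix.det_fin_three] at h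
    simp only [Matrix.of_apply, Matrix.cons_val', Matrix.cons_val_zero, Matrix.empty_val',
      Matrix.cons_val_fin_one, Matrix.cons_val_one, Matrix.head_cons, Matrix.head_fin_const,
      Matrix.cons_val_two, Matrix.tail_cons] at h
    linear_combination h
  have e5 : α * x₂ = β * x₁ := by
    have h := key c d x dcdx
    rw [hC, hD, hX, Matrix.det_fin_three] at h
    simp only [Matrix.of_apply, Matrix.cons_val', Matrix.cons_val_zero, Matrix.empty_val',
      Matrix.cons_val_fin_one, Matrix.cons_val_one, Matrix.head_cons, Matrix.head_fin_const,
      Matrix.cons_val_two, Matrix.tail_cons] at h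
    linear_combination h
  have e6 : y₂ = 0 := by
    have h := key a c y dacy
    rw [hA, hC, hY, Matrix.det_fin_three] at h
    simp only [Matrix.of_apply, Matrix.cons_val', Matrix.cons_val_zero, Matrix.empty_val',
      Matrix.cons_val_fin_one, Matrix.cons_val_one, Matrix.head_cons, Matrix.head_fin_const,
      Matrix.cons_val_two, Matrix.tail_cons] at h
    linear_combination -h
  have e7 : γ * y₁ = α * y₃ := by
    have h := key b d y dbdy
    rw [hB, hD, hY, Matrix.det_fin_three] at h
    simp only [Matrix.of_apply, Matrix.cons_val', Matrix.cons_val_zero, Matrix.empty_val',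
      Matrix.cons_val_fin_one, Matrix.cons_val_one, Matrix.head_cons, Matrix.head_fin_const,
      Matrix.cons_val_two, Matrix.tail_cons] at h
    linear_combination h
  have e8 : z₁ = 0 := by
    have h := key b c z dbcz
    rw [hB, hC, hZ, Matrix.det_fin_three] at h
    simp only [Matrix.of_apply, Matrix.cons_val', Matrix.cons_val_zero, Matrix.empty_val',
      Matrix.cons_val_fin_one, Matrix.cons_val_one, Matrix.head_cons, Matrix.head_fin_const,
      Matrix.cons_val_two, Matrix.tail_cons] at h
    linear_combination h
  have e9 : β * z₃ = γ * z₂ := by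
    have h := key a d z dadz
    rw [hA, hD, hZ, Matrix.det_fin_three] at h
    simp only [Matrix.of_apply, Matrix.cons_val', Matrix.cons_val_zero, Matrix.empty_val',
      Matrix.cons_val_fin_one, Matrix.cons_val_one, Matrix.head_cons, Matrix.head_fin_const,
      Matrix.cons_val_two, Matrix.tail_cons] at h
    linear_combination h
  have e10 : x₁ * y₃ * z₂ + x₂ * y₁ * z₃ = 0 := by
    have h := key x y z dxyz
    rw [hX, hY, hZ, Matrix.det_fin_three] at h
    simp only [Matrix.of_apply, Matrix.cons_val', Matrix.cons_val_zero, Matrix.empty_val',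
      Matrix.cons_val_fin_one, Matrix.cons_val_one, Matrix.head_cons, Matrix.head_fin_const,
      Matrix.cons_val_two, Matrix.tail_cons] at h
    linear_combination -h + (x₁*z₃ - x₃*z₁)*e6 + (x₂*y₃)*e8 + (y₁*z₂)*e4
  have hNu : IsUnit N := (Matrix.isUnit_iff_isUnit_det N).mpr (isUnit_iff_ne_zero.2 hNdet)
  have hinj : Function.Injective fun v : Fin 3 → ℂ => Matrix.vecMul v N :=
    Matrix.vecMul_injective_iff_isUnit.mpr hNu
  have hxne : Matrix.vecMul x N ≠ 0 := by
    intro h0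
    have h1 : Matrix.vecMul x N = Matrix.vecMul 0 N := by rw [h0, Matrix.zero_vecMul]
    exact Projectivization.rep_nonzero _ (hinj h1)
  have hyne : Matrix.vecMul y N ≠ 0 := by
    intro h0
    have h1 : Matrix.vecMul y N = Matrix.vecMul 0 N := by rw [h0, Matrix.zero_vecMul]
    exact Projectivization.rep_nonzero _ (hinj h1)
  have hzne : Matrix.vecMul z N ≠ 0 := by
    intro h0
    have h1 : Matrix.vecMul z N = Matrix.vecMul 0 N := by rw [h0, Matrix.zero_vecMul]
    exact Projectivization.rep_nonzero _ (hinj h1)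
  have hx₁ : x₁ ≠ 0 := by
    intro h0
    apply hxne
    have hx2 : x₂ = 0 :=
      (mul_eq_zero.mp (show α * x₂ = 0 by linear_combination e5 + β * h0)).resolve_left hα
    rw [hX]
    ext j
    fin_cases j <;> simp [h0, hx2, e4]
  have hy₃ : y₃ ≠ 0 := by
    intro h0
    apply hyne
    have hy1 : y₁ = 0 :=
      (mul_eq_zero.mp (show γ * y₁ = 0 by linear_combination e7 + α * h0)).resolve_left hγ
    rw [hY]
    ext j
    fin_cases j <;> simp [h0, hy1, e6]
  have hz₂ : z₂ ≠ 0 := by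
    intro h0
    apply hzne
    have hz3 : z₃ = 0 :=
      (mul_eq_zero.mp (show β * z₃ = 0 by linear_combination e9 + γ * h0)).resolve_left hβ
    rw [hZ]
    ext j
    fin_cases j <;> simp [h0, hz3, e8]
  have e11 : α * β * γ * (x₂ * y₁ * z₃) = α * β * γ * (x₁ * y₃ * z₂) := by
    linear_combination (γ * y₁ * β * z₃) * e5 + (β * x₁ * β * z₃) * e7 + (β * x₁ * α * y₃) * e9
  have final : α * β * γ * (2 * (x₁ * y₃ * z₂)) = 0 := by
    linear_combination α * β * γ * e10 - e11
  exact (mul_ne_zero hα (mul_ne_zero hβ (mul_ne_zero hγ (mul_ne_zero two_ne_zero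
    (mul_ne_zero hx₁ (mul_ne_zero hy₃ hz₂)))))) (by linear_combination final)
end

section
/- A binary linear code of length 8 and dimension 4 in which every nonzero codeword has weight divisible by 4 contains the all-ones vector (the vector of weight 8). (In fact such a code is the extended Hamming code.) -/
/-!
Since `wt (v + w) = wt v + wt w - 2 |supp v ∩ supp w|`, any two words of a code whose weights
are all divisible by 4 share an even number of nonzero coordinates: the code is self-orthogonal
for the dot product. Having dimension 4 = 8 / 2 it is then self-dual, and the all-ones vector,
whose dot product with `v` is `wt v mod 2 = 0`, lies in the dual.
-/

/-- The weight of a binary word: the number of nonzero coordinates. -/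
def codeWeight {n : ℕ} (v : Fin n → ZMod 2) : ℕ :=
  (Finset.univ.filter fun i => v i ≠ 0).card

open Finset Module Matrix
open LinearMap (BilinForm)

theorem LinearMap.BilinForm.orthogonal_eq_self_of_le_orthogonal {K V : Type*} [Field K]
    [AddCommGroup V] [Module K V] [FiniteDimensional K V] {B : BilinForm K V}
    (hB : B.Nondegenerate) {W : Submodule K V} (hW : W ≤ B.orthogonal W)
    (hdim : 2 * finrank K W = finrank K V) : B.orthogonal W = W :=
  (Submodule.eq_of_le_of_finrank_le hW (by rw [finrank_orthogonal hB]; omega)).symm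

theorem Matrix.dotProductBilin_nondegenerate (K ι : Type*) [Field K] [Fintype ι] :
    (dotProductBilin K K : BilinForm K (ι → K)).Nondegenerate :=
  BilinForm.Nondegenerate.ofSeparatingLeft fun v hv => dotProduct_eq_zero v hv

section Weight

variable {n : ℕ}

theorem codeWeight_add (v w : Fin n → ZMod 2) :
    codeWeight (v + w) + 2 * #{i | v i ≠ 0 ∧ w i ≠ 0} = codeWeight v + codeWeight w := by
  simp only [codeWeight, card_filter, mul_sum, ← sum_add_distrib, Pi.add_apply]
  refine sum_congr rfl fun i _ => ?_
  generalize v i = a; generalize w i = b; revert a b; decide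

theorem dotProduct_eq_card_filter_ne_zero (v w : Fin n → ZMod 2) :
    v ⬝ᵥ w = (#{i | v i ≠ 0 ∧ w i ≠ 0} : ZMod 2) := by
  rw [card_filter]
  push_cast
  refine sum_congr rfl fun i _ => ?_
  generalize v i = a; generalize w i = b; revert a b; decide

theorem dotProduct_one_eq_codeWeight (v : Fin n → ZMod 2) :
    v ⬝ᵥ 1 = (codeWeight v : ZMod 2) := by
  simp [dotProduct_eq_card_filter_ne_zero, codeWeight]

theorem dotProduct_eq_zero_of_four_dvd_codeWeight {v w : Fin n → ZMod 2}
    (hv : 4 ∣ codeWeight v) (hw : 4 ∣ codeWeight w) (hvw : 4 ∣ codeWeight (v + w)) :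
    v ⬝ᵥ w = 0 := by
  have := codeWeight_add v w
  rw [dotProduct_eq_card_filter_ne_zero, ZMod.natCast_eq_zero_iff]
  omega

end Weight

section Code

variable {n : ℕ} (C : Submodule (ZMod 2) (Fin n → ZMod 2))

theorem le_orthogonal_of_four_dvd_codeWeight (hC : ∀ v ∈ C, 4 ∣ codeWeight v) :
    C ≤ BilinForm.orthogonal (dotProductBilin (ZMod 2) (ZMod 2)) C := fun v hv w hw =>
  dotProduct_eq_zero_of_four_dvd_codeWeight (hC w hw) (hC v hv) (hC _ (C.add_mem hw hv))

theorem one_mem_orthogonal_of_two_dvd_codeWeight (hC : ∀ v ∈ C, 2 ∣ codeWeight v) :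
    1 ∈ BilinForm.orthogonal (dotProductBilin (ZMod 2) (ZMod 2)) C := fun v hv => by
  change v ⬝ᵥ 1 = 0
  rw [dotProduct_one_eq_codeWeight, ZMod.natCast_eq_zero_iff]
  exact hC v hv

end Code

/-- A binary linear code of length 8 and dimension 4 in which every nonzero codeword
has weight divisible by 4 contains the all-ones vector (the vector of weight 8). -/
theorem all_ones_mem_of_doubly_even_code
    (V : Submodule (ZMod 2) (Fin 8 → ZMod 2))
    (hdim : Module.finrank (ZMod 2) V = 4)
    (hweight : ∀ v ∈ V, v ≠ 0 → 4 ∣ codeWeight v) :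
    (fun _ => 1 : Fin 8 → ZMod 2) ∈ V := by
  have h4 : ∀ v ∈ V, 4 ∣ codeWeight v := fun v hv => by
    rcases eq_or_ne v 0 with rfl | h
    · simp [codeWeight]
    · exact hweight v hv h
  have hself : BilinForm.orthogonal (dotProductBilin (ZMod 2) (ZMod 2)) V = V :=
    BilinForm.orthogonal_eq_self_of_le_orthogonal (dotProductBilin_nondegenerate _ _)
      (le_orthogonal_of_four_dvd_codeWeight V h4) (by simp [hdim])
  rw [← hself]
  exact one_mem_orthogonal_of_two_dvd_codeWeight V fun v hv => dvd_trans ⟨2, rfl⟩ (h4 v hv)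
end

section
/- Let V be a binary linear code of length 7 and dimension 3 in which every nonzero codeword has weight 4 (i.e. V is a Hamming-type code). Then the map assigning to each coordinate index i in {1,...,7} the vector of values of some fixed basis of the dual evaluations realizes a bijection between {1,...,7} and the nonzero vectors of F_2^3, under which three indices i_1, i_2, i_3 have the property that some nonzero codeword vanishes at all three if and only if the corresponding vectors of F_2^3 are linearly dependent. -/
open Finset Matrix Module

theorem Matrix.not_linearIndependent_iff_exists_forall_dotProduct_eq_zero
    {K n : Type*} [Field K] [Fintype n] [DecidableEq n] (v : n → n → K) :
    ¬ LinearIndependent K v ↔ ∃ c ≠ 0, ∀ i, v i ⬝ᵥ c = 0 := by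
  rw [show v = (Matrix.of v).row from rfl, linearIndependent_rows_iff_isUnit,
    isUnit_iff_isUnit_det, isUnit_iff_ne_zero, not_not, ← exists_mulVec_eq_zero_iff]
  simp [funext_iff, mulVec]

theorem Module.Dual.finrank_le_finrank_ker_add_one {K M : Type*} [Field K] [AddCommGroup M]
    [Module K M] [FiniteDimensional K M] (f : Dual K M) :
    finrank K M ≤ finrank K (LinearMap.ker f) + 1 := by
  have := (LinearMap.range f).finrank_le
  rw [finrank_self] at this
  rw [← f.finrank_range_add_finrank_ker]
  omega

theorem Submodule.exists_mem_ne_zero_and_iff {R M N : Type*} [Semiring R] [AddCommMonoid M]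
    [AddCommMonoid N] [Module R M] [Module R N] {V : Submodule R N} (e : M ≃ₗ[R] V)
    (P : N → Prop) : (∃ v ∈ V, v ≠ 0 ∧ P v) ↔ ∃ c ≠ 0, P (e c) := by
  constructor
  · rintro ⟨v, hv, hv0, hP⟩
    exact ⟨e.symm ⟨v, hv⟩, by simpa using hv0, by simpa using hP⟩
  · rintro ⟨c, hc, hP⟩
    exact ⟨e c, (e c).2, by simpa using hc, hP⟩

section GeneratorMatrix

variable {K ι κ : Type*} [Field K] [Fintype κ] {V : Submodule K (ι → K)}

noncomputable def generatorColumn (b : Basis κ K V) (t : ι) : κ → K := fun k => (b k : ι → K) t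

theorem generatorColumn_dotProduct (b : Basis κ K V) (t : ι) (c : κ → K) :
    generatorColumn b t ⬝ᵥ c = (b.equivFun.symm c : ι → K) t := by
  simp [generatorColumn, dotProduct, Finset.sum_apply, mul_comm]

theorem apply_eq_generatorColumn_dotProduct (b : Basis κ K V) {v : ι → K} (hv : v ∈ V) (t : ι) :
    v t = generatorColumn b t ⬝ᵥ b.equivFun ⟨v, hv⟩ := by
  simp [generatorColumn_dotProduct]

end GeneratorMatrix

theorem two_mul_card_support_union {n : ℕ} (a b : Fin n → ZMod 2) :
    2 * #{t | a t ≠ 0 ∨ b t ≠ 0} = codeWeight a + codeWeight b + codeWeight (a - b) := by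
  simp only [codeWeight, card_filter, mul_sum, ← sum_add_distrib, Pi.sub_apply]
  refine sum_congr rfl fun t _ => ?_
  generalize a t = x
  generalize b t = y
  revert x y
  decide

section SimplexCode

variable {V : Submodule (ZMod 2) (Fin 7 → ZMod 2)}

theorem eq_of_apply_eq_zero_of_apply_eq_zero (hweight : ∀ v ∈ V, v ≠ 0 → codeWeight v = 4)
    {i j : Fin 7} (hij : i ≠ j) {a b : Fin 7 → ZMod 2} (ha : a ∈ V) (hb : b ∈ V)
    (ha0 : a ≠ 0) (hb0 : b ≠ 0) (hai : a i = 0) (haj : a j = 0) (hbi : b i = 0)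
    (hbj : b j = 0) : a = b := by
  by_contra hab
  have hunion := two_mul_card_support_union a b
  rw [hweight a ha ha0, hweight b hb hb0,
    hweight _ (V.sub_mem ha hb) (sub_ne_zero.mpr hab)] at hunion
  have hsub : ({t | a t ≠ 0 ∨ b t ≠ 0} : Finset (Fin 7)) ⊆ {i, j}ᶜ := by
    intro t ht
    simp only [mem_filter, mem_univ, true_and] at ht
    simp only [mem_compl, mem_insert, mem_singleton]
    rintro (rfl | rfl) <;> simp_all
  have hcompl : #({i, j}ᶜ : Finset (Fin 7)) = 5 := by
    rw [card_compl, card_pair hij, Fintype.card_fin]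
  have := card_le_card hsub
  omega

theorem exists_mem_apply_eq_zero_apply_ne_zero (hdim : finrank (ZMod 2) V = 3)
    (hweight : ∀ v ∈ V, v ≠ 0 → codeWeight v = 4) {i j : Fin 7} (hij : i ≠ j) :
    ∃ v ∈ V, v j = 0 ∧ v i ≠ 0 := by
  by_contra! hvanish
  let f : Dual (ZMod 2) V := (LinearMap.proj j).comp V.subtype
  have hker : 1 < finrank (ZMod 2) (LinearMap.ker f) := by
    have := f.finrank_le_finrank_ker_add_one
    omega
  obtain ⟨x, hx0⟩ := (finrank_pos_iff_exists_ne_zero).mp (zero_lt_one.trans hker)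
  obtain ⟨y, hxy⟩ := exists_linearIndependent_pair_of_one_lt_finrank hker hx0
  let g : LinearMap.ker f → Fin 7 → ZMod 2 := fun z => (z : V)
  have hg : Function.Injective g := Subtype.val_injective.comp Subtype.val_injective
  have hgV (z : LinearMap.ker f) : g z ∈ V := (z : V).2
  have hgj (z : LinearMap.ker f) : g z j = 0 := z.2
  have hne : x ≠ y := by simpa using hxy.injective.ne zero_ne_one
  refine hne (hg (eq_of_apply_eq_zero_of_apply_eq_zero hweight hij (hgV x) (hgV y) ?_ ?_
    (hvanish _ (hgV x) (hgj x)) (hgj x) (hvanish _ (hgV y) (hgj y)) (hgj y)))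
  · exact hg.ne_iff' rfl |>.mpr hx0
  · exact hg.ne_iff' rfl |>.mpr (hxy.ne_zero 1)

end SimplexCode

/-- Let `V` be a binary linear code of length 7 and dimension 3 in which every nonzero
codeword has weight 4 (a simplex/Hamming-type code).  Then the coordinates of `V` can be
put in bijection with the nonzero vectors of `𝔽₂³` in such a way that three distinct
indices `i₁, i₂, i₃` support a nonzero codeword vanishing at all three if and only if the
corresponding vectors of `𝔽₂³` are linearly dependent. -/
theorem simplex_code_coordinates_fano
    (V : Submodule (ZMod 2) (Fin 7 → ZMod 2))
    (hdim : Module.finrank (ZMod 2) V = 3)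
    (hweight : ∀ v ∈ V, v ≠ 0 → codeWeight v = 4) :
    ∃ φ : Fin 7 → (Fin 3 → ZMod 2),
      Function.Injective φ ∧ (∀ i, φ i ≠ 0) ∧
      ∀ i₁ i₂ i₃ : Fin 7, i₁ ≠ i₂ → i₁ ≠ i₃ → i₂ ≠ i₃ →
        ((∃ v ∈ V, v ≠ 0 ∧ v i₁ = 0 ∧ v i₂ = 0 ∧ v i₃ = 0) ↔
          ¬ LinearIndependent (ZMod 2) ![φ i₁, φ i₂, φ i₃]) := by
  let b := finBasisOfFinrankEq (ZMod 2) V hdim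
  refine ⟨generatorColumn b, fun i j hφ => ?_, fun i hφ => ?_, fun i₁ i₂ i₃ _ _ _ => ?_⟩
  · by_contra hij
    obtain ⟨v, hv, hvj, hvi⟩ := exists_mem_apply_eq_zero_apply_ne_zero hdim hweight hij
    rw [apply_eq_generatorColumn_dotProduct b hv, hφ,
      ← apply_eq_generatorColumn_dotProduct b hv] at hvi
    exact hvi hvj
  · obtain ⟨j, hji⟩ := exists_ne i
    obtain ⟨v, hv, -, hvi⟩ := exists_mem_apply_eq_zero_apply_ne_zero hdim hweight hji.symm
    rw [apply_eq_generatorColumn_dotProduct b hv, hφ, zero_dotProduct] at hvi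
    exact hvi rfl
  · rw [Submodule.exists_mem_ne_zero_and_iff b.equivFun.symm,
      not_linearIndependent_iff_exists_forall_dotProduct_eq_zero]
    simp [Fin.forall_fin_succ, generatorColumn_dotProduct]
end

section
/- Let Y be an Enriques surface (so Num(Y) is a rank 10 even unimodular lattice) containing 7 disjoint (-2)-curves N_1,...,N_7 and three elliptic half-pencils E_1, E_2, E_3 with E_i^2=0, E_i·E_j=1 for i≠j, and E_i·N_j=0 for all i,j. Then the class of B + N_1 + ... + N_7, where B = E_1+E_2+E_3, is divisible by 2 in Num(Y). -/
/-- Let `Y` be an Enriques surface, so that `Num(Y)` is a rank 10 even unimodular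
lattice, containing the classes of 7 disjoint `(-2)`-curves `N₁, …, N₇` and of three
elliptic half-pencils `E₁, E₂, E₃` with `Eᵢ² = 0`, `Eᵢ·Eⱼ = 1` for `i ≠ j` and
`Eᵢ·Nⱼ = 0` for all `i, j`.  Then the class of `B + N₁ + ⋯ + N₇`, where
`B = E₁ + E₂ + E₃`, is divisible by 2 in `Num(Y)`. -/
theorem enriques_class_divisible_by_two
    (Λ : Type*) [AddCommGroup Λ] [Module ℤ Λ]
    [Module.Free ℤ Λ] [Module.Finite ℤ Λ]
    (hrk : Module.finrank ℤ Λ = 10)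
    (B : Λ →ₗ[ℤ] Λ →ₗ[ℤ] ℤ)
    (hsymm : ∀ x y, B x y = B y x)
    (heven : ∀ x, Even (B x x))
    (hunimod : Function.Bijective fun x => B x)
    (E : Fin 3 → Λ) (N : Fin 7 → Λ)
    (hE : ∀ i j, B (E i) (E j) = if i = j then 0 else 1)
    (hN : ∀ i j, B (N i) (N j) = if i = j then -2 else 0)
    (hEN : ∀ i j, B (E i) (N j) = 0) :
    ∃ L : Λ, (E 0 + E 1 + E 2) + ∑ j, N j = (2 : ℤ) • L := by
  classical
  have hbridge := fun (k : ℤ) (z : Λ) => (Int.cast_smul_eq_zsmul ℤ k z).symm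
  simp only [Int.cast_id] at hbridge
  simp only [hbridge]
  have hNE : ∀ j i, B (N j) (E i) = 0 := fun j i => (hsymm _ _).trans (hEN i j)
  -- the ten vectors are linearly independent
  have hwli : LinearIndependent ℤ (Sum.elim E N) := by
    rw [Fintype.linearIndependent_iff]
    intro g hg
    rw [Fintype.sum_sum_type] at hg
    simp only [Sum.elim_inl, Sum.elim_inr] at hg
    have hgN : ∀ j, g (Sum.inr j) = 0 := by
      intro j
      have h0 := congrArg (fun t => B t (N j)) hg
      simp only [map_add, map_sum, map_smul, LinearMap.add_apply, LinearMap.sum_apply,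
        LinearMap.smul_apply, smul_eq_mul, hEN, hN, mul_zero, Finset.sum_const_zero,
        zero_add, mul_ite, Finset.sum_ite_eq', Finset.mem_univ, if_true, map_zero,
        LinearMap.zero_apply] at h0
      omega
    have hgE : ∀ i, g (Sum.inl i) = 0 := by
      have heq := fun i => congrArg (fun t => B t (E i)) hg
      have e0 := heq 0; have e1 := heq 1; have e2 := heq 2
      simp only [map_add, map_sum, map_smul, LinearMap.add_apply, LinearMap.sum_apply,
        LinearMap.smul_apply, smul_eq_mul, hNE, hE, mul_zero, Finset.sum_const_zero,
        add_zero, Fin.sum_univ_three, map_zero, LinearMap.zero_apply, mul_ite, mul_one] at e0 e1 e2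
      norm_num at e0 e1 e2
      intro i; fin_cases i <;> simp <;> omega
    rintro (i | j)
    · exact hgE i
    · exact hgN j
  -- every vector has a nonzero multiple in the span of the ten vectors
  have htor : ∀ y : Λ, ∃ k : ℤ, k ≠ 0 ∧
      k • y ∈ Submodule.span ℤ (Set.range (Sum.elim E N)) := by
    intro y
    simp only [hbridge]
    by_contra hcon
    push_neg at hcon
    have hli2 : LinearIndependent ℤ (Sum.elim (Sum.elim E N) (fun _ : Unit => y)) := by
      rw [Fintype.linearIndependent_iff]
      intro g hg
      rw [Fintype.sum_sum_type] at hg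
      simp only [Sum.elim_inl, Sum.elim_inr, Fintype.sum_unique, PUnit.default_eq_unit] at hg
      have hy0 : g (Sum.inr PUnit.unit) = 0 := by
        by_contra hne
        refine hcon (-(g (Sum.inr PUnit.unit))) (neg_ne_zero.mpr hne) ?_
        rw [neg_smul]
        have hrep := neg_eq_of_add_eq_zero_left hg
        rw [hrep]
        exact Submodule.sum_smul_mem _ _ (fun i _ => Submodule.subset_span (Set.mem_range_self i))
      have h0y : (0 : ℤ) • y = 0 := zero_zsmul y
      rw [hbridge] at h0y
      rw [hy0, h0y, add_zero] at hg
      have h1 := Fintype.linearIndependent_iff.mp hwli (fun i => g (Sum.inl i)) hg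
      rintro (i | ⟨⟩)
      · exact h1 i
      · exact hy0
    have hcard := hli2.fintype_card_le_finrank
    rw [hrk] at hcard
    norm_num [Fintype.card_sum] at hcard
  simp only [hbridge] at htor
  -- nondegeneracy against the ten vectors
  have hker : ∀ z : Λ, (∀ i, B z (E i) = 0) → (∀ j, B z (N j) = 0) → z = 0 := by
    intro z hzE hzN
    have hspan : Submodule.span ℤ (Set.range (Sum.elim E N)) ≤ LinearMap.ker (B z) := by
      rw [Submodule.span_le]
      rintro a ⟨k, rfl⟩
      rcases k with i | j
      · exact LinearMap.mem_ker.mpr (hzE i)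
      · exact LinearMap.mem_ker.mpr (hzN j)
    have hall : ∀ y : Λ, B z y = 0 := by
      intro y
      obtain ⟨k, hk0, hk⟩ := htor y
      have h1 := LinearMap.mem_ker.mp (hspan hk)
      simp only [map_smul, smul_eq_mul] at h1
      rcases mul_eq_zero.mp h1 with h | h
      · exact absurd h hk0
      · exact h
    have hzz : (fun x => B x) z = (fun x => B x) 0 := by
      simp only [map_zero]
      exact LinearMap.ext hall
    exact hunimod.injective hzz
  set v : Λ := (E 0 + E 1 + E 2) + ∑ j, N j with hv
  clear_value v
  have hvE : ∀ i, B v (E i) = 2 := by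
    intro i
    rw [hv]
    fin_cases i <;>
      simp [map_add, map_sum, LinearMap.add_apply, LinearMap.sum_apply, hE, hNE]
  have hvN : ∀ j, B v (N j) = -2 := by
    intro j
    rw [hv]
    simp [map_add, map_sum, LinearMap.add_apply, LinearMap.sum_apply, hEN, hN,
      Finset.sum_ite_eq', Finset.mem_univ]
  have hEv : ∀ i, B (E i) v = 2 := fun i => (hsymm _ _).trans (hvE i)
  have hNv : ∀ j, B (N j) v = -2 := fun j => (hsymm _ _).trans (hvN j)
  -- all pairings with v are even
  have hdvd : ∀ x : Λ, 2 ∣ B v x := by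
    intro x
    set p : Fin 3 → ℤ := fun i => B x (E i) with hp
    set σ : ℤ := p 0 + p 1 + p 2 with hσ
    set m : Fin 3 → ℤ := fun i => σ - 2 * p i with hm
    set n : Fin 7 → ℤ := fun j => -(B x (N j)) with hn
    set u : Λ := (∑ i, m i • E i) + ∑ j, n j • N j with hu
    clear_value u
    simp only [hbridge] at hu
    have hBu : ∀ y, B u y = (∑ k, m k * B (E k) y) + ∑ j, n j * B (N j) y := by
      intro y
      rw [hu]
      simp [map_add, map_sum, map_smul, LinearMap.add_apply, LinearMap.sum_apply,
        LinearMap.smul_apply, smul_eq_mul]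
    have huE : ∀ i, B u (E i) = 2 * p i := by
      intro i
      rw [hBu (E i)]
      simp only [hNE, mul_zero, Finset.sum_const_zero, add_zero, hE]
      fin_cases i <;> simp [Fin.sum_univ_three, hm, hσ] <;> ring
    have huN : ∀ j, B u (N j) = -2 * n j := by
      intro j
      rw [hBu (N j)]
      simp only [hEN, mul_zero, Finset.sum_const_zero, zero_add, hN, mul_ite,
        Finset.sum_ite_eq', Finset.mem_univ, if_true]
      ring
    have h2x : x + x = u := by
      have hzE : ∀ i, B (x + x - u) (E i) = 0 := by
        intro i
        simp only [map_sub, map_add, LinearMap.sub_apply, LinearMap.add_apply, huE i]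
        simp only [hp]
        ring
      have hzN : ∀ j, B (x + x - u) (N j) = 0 := by
        intro j
        simp only [map_sub, map_add, LinearMap.sub_apply, LinearMap.add_apply, huN j]
        simp only [hn]
        ring
      exact sub_eq_zero.mp (hker _ hzE hzN)
    have hEu : ∀ k, B (E k) u = 2 * p k := fun k => (hsymm _ _).trans (huE k)
    have hNu : ∀ j, B (N j) u = -2 * n j := fun j => (hsymm _ _).trans (huN j)
    -- B v x = (p0+p1+p2) - ∑ n
    have hBvx : B v x = (p 0 + p 1 + p 2) - ∑ j, n j := by
      have h1 : B u v = 2 * (p 0 + p 1 + p 2) - 2 * ∑ j, n j := by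
        rw [hBu v]
        simp only [hEv, hNv]
        rw [Fin.sum_univ_three]
        have e2 : (∑ j, n j * (-2 : ℤ)) = (-2) * ∑ j, n j := by
          rw [Finset.mul_sum]
          exact Finset.sum_congr rfl fun j _ => by ring
        rw [e2]
        simp only [hm, hσ]
        ring
      have h2 : B u v = B x v + B x v := by
        rw [← h2x, map_add, LinearMap.add_apply]
      have h3 : B x v = B v x := hsymm x v
      linarith
    -- quadratic identity
    have hstar : (∑ j, n j * n j) =
        (p 0 + p 1 + p 2) * (p 0 + p 1 + p 2)
          - 2 * (p 0 * p 0 + p 1 * p 1 + p 2 * p 2) - 2 * B x x := by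
      have hC : B u u = 2 * (∑ k, m k * p k) + (-2) * ∑ j, n j * n j := by
        rw [hBu u]
        simp only [hEu, hNu]
        have e1 : (∑ k, m k * (2 * p k)) = 2 * ∑ k, m k * p k := by
          rw [Finset.mul_sum]
          exact Finset.sum_congr rfl fun k _ => by ring
        have e2 : (∑ j, n j * (-2 * n j)) = (-2) * ∑ j, n j * n j := by
          rw [Finset.mul_sum]
          exact Finset.sum_congr rfl fun j _ => by ring
        rw [e1, e2]
      have hD : B u u = 4 * B x x := by
        rw [← h2x]
        simp only [map_add, LinearMap.add_apply]
        ring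
      have hmp : (∑ k, m k * p k) =
          (p 0 + p 1 + p 2) * (p 0 + p 1 + p 2)
            - 2 * (p 0 * p 0 + p 1 * p 1 + p 2 * p 2) := by
        rw [Fin.sum_univ_three]
        simp only [hm, hσ]
        ring
      linarith
    -- parity bookkeeping
    have hsq : ∀ t : ℤ, 2 ∣ t * t - t := by
      intro t
      obtain ⟨s, hs⟩ := Int.even_mul_succ_self (t - 1)
      exact ⟨s, by linarith [hs]⟩
    obtain ⟨a, ha⟩ : 2 ∣ (∑ j, n j * n j) - (∑ j, n j) := by
      rw [← Finset.sum_sub_distrib]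
      exact Finset.dvd_sum fun j _ => hsq (n j)
    obtain ⟨b, hb⟩ := hsq (p 0 + p 1 + p 2)
    exact ⟨a - b + (p 0 * p 0 + p 1 * p 1 + p 2 * p 2) + B x x, by linarith⟩
  -- conclude using unimodularity
  let bas := Module.Free.chooseBasis ℤ Λ
  choose c hc using fun i => hdvd (bas i)
  set f : Λ →ₗ[ℤ] ℤ := bas.constr ℤ c with hf
  have hfv : B v = f + f := by
    refine bas.ext fun i => ?_
    rw [LinearMap.add_apply, hf, Module.Basis.constr_basis, hc i]
    ring
  obtain ⟨L, hL⟩ := hunimod.surjective f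
  have hL' : B L = f := hL
  refine ⟨L, ?_⟩
  have hvL : v = L + L := by
    apply hunimod.injective
    show B v = B (L + L)
    rw [map_add, hfv, hL']
  rw [hvL, two_smul]
end
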